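/- arXiv:1512.02939 — 8 statements merged into one kernel-verified Lean document; each statement's English description precedes it below -/
import Mathlib

section
/- With notation as in the basic construction (functions $A,B,C$ on $[r,u]$ built from $a<b<c$ and positive slopes $\alpha,\beta,\gamma$), suppose additionally that $b/a < c/b$. Then $\max_{q \in [r,u]} A(q)/q = a/r$. -/
/-! On `[r, t]` the ratio is `a / q`, largest at `q = r`. On `[t, u]` the function `A` is affine,
so `A q / q = α + (a - α t) / q` is monotone and its maximum is at an endpoint: `a / t ≤ a / r`,
and `b / u < a / r`, which is where `b / a < c / b` enters, as `b * b < a * c`. -/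

open Set

theorem affine_div_le_max_of_mem_Icc {m k x y q : ℝ} (hx : 0 < x) (hq : q ∈ Icc x y) :
    (m * q + k) / q ≤ max ((m * x + k) / x) ((m * y + k) / y) := by
  have hq0 : 0 < q := hx.trans_le hq.1
  have hsplit : ∀ z, 0 < z → (m * z + k) / z = m + k / z := fun z hz => by
    field_simp
  rw [hsplit q hq0, hsplit x hx, hsplit y (hq0.trans_le hq.2)]
  rcases le_total 0 k with hk | hk
  · exact le_max_of_le_left (by gcongr; exact hq.1)
  · have h := div_le_div_of_nonneg_left (neg_nonneg.2 hk) hq0 hq.2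
    rw [neg_div, neg_div, neg_le_neg_iff] at h
    exact le_max_of_le_right (by linarith)

section BasicConstruction

variable {a b c α β γ : ℝ}

theorem basic_r_lt_t (hab : a < b) (hbc : b < c) (hβ : 0 < β) (hγ : 0 < γ) :
    a / α + a / β + b / γ < a / α + b / β + c / γ := by
  have : a / β < b / β := by gcongr
  have : b / γ < c / γ := by gcongr
  linarith

theorem basic_t_lt_u (hab : a < b) (hα : 0 < α) :
    a / α + b / β + c / γ < b / α + b / β + c / γ := by
  have : a / α < b / α := by gcongr
  linarith

theorem basic_slope_reaches_b (hα : 0 < α) :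
    a + α * ((b / α + b / β + c / γ) - (a / α + b / β + c / γ)) = b := by
  field_simp
  ring

theorem basic_b_mul_r_lt_a_mul_u (hsq : b * b < a * c) (hγ : 0 < γ) :
    b * (a / α + a / β + b / γ) < a * (b / α + b / β + c / γ) := by
  have : b * b / γ < a * c / γ := by gcongr
  have hexpand : ∀ x y z : ℝ, x * (y / α + y / β + z / γ) = x * y / α + x * y / β + x * z / γ :=
    fun x y z => by ring
  rw [hexpand, hexpand, mul_comm b a]
  linarith

end BasicConstruction

theorem stmt_2_general (a b c α β γ : ℝ) (ha : 0 < a) (hα : 0 < α) (hβ : 0 < β) (hγ : 0 < γ)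
    (hab : a < b) (hratio : b / a < c / b)
    (r t u : ℝ)
    (hr : r = a / α + a / β + b / γ)
    (ht : t = a / α + b / β + c / γ) (hu : u = b / α + b / β + c / γ)
    (A : ℝ → ℝ)
    (hA : ∀ q : ℝ, A q = if q ≤ t then a else a + α * (q - t)) :
    IsGreatest ((fun q => A q / q) '' Icc r u) (a / r) := by
  have hb : 0 < b := ha.trans hab
  have hsq : b * b < a * c := by
    rw [div_lt_div_iff₀ ha hb] at hratio; linarith
  have hbc : b < c := (one_lt_div hb).1 (((one_lt_div ha).2 hab).trans hratio)
  have hr0 : 0 < r := by rw [hr]; positivity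
  have hrt : r ≤ t := by rw [hr, ht]; exact (basic_r_lt_t hab hbc hβ hγ).le
  have htu : t ≤ u := by rw [ht, hu]; exact (basic_t_lt_u hab hα).le
  have hAu : α * u + (a - α * t) = b := by
    have h := basic_slope_reaches_b (a := a) (b := b) (β := β) (c := c) (γ := γ) hα
    rw [← ht, ← hu] at h
    linarith
  have hbu : b / u ≤ a / r := by
    rw [div_le_div_iff₀ (hr0.trans_le (hrt.trans htu)) hr0, hr, hu]
    exact (basic_b_mul_r_lt_a_mul_u hsq hγ).le
  refine ⟨⟨r, ⟨le_rfl, hrt.trans htu⟩, by simp [hA, hrt]⟩, ?_⟩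
  rintro _ ⟨q, ⟨hrq, hqu⟩, rfl⟩
  rcases le_or_gt q t with hqt | htq
  · simp only [hA, if_pos hqt]
    exact div_le_div_of_nonneg_left ha.le hr0 hrq
  · calc A q / q = (α * q + (a - α * t)) / q := by rw [hA, if_neg htq.not_ge]; ring_nf
      _ ≤ max ((α * t + (a - α * t)) / t) ((α * u + (a - α * t)) / u) :=
        affine_div_le_max_of_mem_Icc (hr0.trans_le hrt) ⟨htq.le, hqu⟩
      _ ≤ a / r := by
        rw [hAu, add_sub_cancel]
        exact max_le (div_le_div_of_nonneg_left ha.le hr0 hrt) hbu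

theorem stmt_2 (a b c α β γ : ℝ) (ha : 0 < a) (hα : 0 < α) (hβ : 0 < β) (hγ : 0 < γ)
    (hab : a < b) (hbc : b < c) (hratio : b / a < c / b)
    (r t u : ℝ)
    (hr : r = a / α + a / β + b / γ)
    (ht : t = a / α + b / β + c / γ) (hu : u = b / α + b / β + c / γ)
    (A : ℝ → ℝ)
    (hA : ∀ q : ℝ, A q = if q ≤ t then a else a + α * (q - t)) :
    IsGreatest ((fun q => A q / q) '' Icc r u) (a / r) :=
  stmt_2_general a b c α β γ ha hα hβ hγ hab hratio r t u hr ht hu A hA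
end

section
/- With notation as in the basic construction (functions $A,B,C$ on $[r,u]$ built from $a<b<c$ and positive slopes $\alpha,\beta,\gamma$), suppose additionally that $b/a < c/b$. Then $\min_{q \in [r,u]} C(q)/q = b/s$. -/
open Set

theorem stmt_3 (a b c α β γ : ℝ) (ha : 0 < a) (hα : 0 < α) (hβ : 0 < β) (hγ : 0 < γ)
    (hab : a < b) (hbc : b < c) (hratio : b / a < c / b)
    (r s t u : ℝ)
    (hr : r = a / α + a / β + b / γ) (hs : s = a / α + b / β + b / γ)
    (ht : t = a / α + b / β + c / γ) (hu : u = b / α + b / β + c / γ)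
    (C : ℝ → ℝ)
    (hC : ∀ q : ℝ, C q = if q ≤ s then b else if q ≤ t then b + γ * (q - s) else c) :
    IsLeast ((fun q => C q / q) '' Icc r u) (b / s) := by
  have hb : 0 < b := ha.trans hab
  have hc : 0 < c := hb.trans hbc
  have hrpos : 0 < r := by rw [hr]; positivity
  have hspos : 0 < s := by rw [hs]; positivity
  have hrs : r ≤ s := by rw [hr, hs]; gcongr
  have hst : s ≤ t := by rw [hs, ht]; gcongr
  have htu : t ≤ u := by rw [ht, hu]; gcongr
  have hb2 : b * b ≤ a * c := by
    rw [div_lt_div_iff₀ ha hb] at hratio; nlinarith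
  have hγs : b ≤ γ * s := by
    rw [hs, mul_add, mul_add, mul_div_cancel₀ b hγ.ne']
    have h1 := mul_pos hγ (div_pos ha hα)
    have h2 := mul_pos hγ (div_pos hb hβ)
    linarith
  have hcs : b * u ≤ c * s := by
    rw [hs, hu]
    simp only [div_eq_mul_inv]
    have h1 : 0 ≤ (a * c - b * b) * α⁻¹ :=
      mul_nonneg (by linarith) (inv_pos.2 hα).le
    have h2 : 0 ≤ (b * (c - b)) * β⁻¹ :=
      mul_nonneg (mul_nonneg hb.le (by linarith)) (inv_pos.2 hβ).le
    nlinarith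
  constructor
  · exact ⟨s, ⟨hrs, hst.trans htu⟩, by simp only; rw [hC s]; simp⟩
  · rintro x ⟨q, ⟨hq1, hq2⟩, rfl⟩
    have hqpos : 0 < q := hrpos.trans_le hq1
    simp only
    rw [hC q]
    split_ifs with h1 h2
    · gcongr
    · rw [div_le_div_iff₀ hspos hqpos]
      have hsq : s ≤ q := le_of_not_ge h1
      nlinarith
    · rw [div_le_div_iff₀ hspos hqpos]
      have : b * q ≤ b * u := mul_le_mul_of_nonneg_left hq2 hb.le
      linarith
end

section
/- Let $a,b,c,\alpha,\beta,\gamma>0$ with $a<b<c$ and $b/a<c/b$, and set $r = a/\alpha + a/\beta + b/\gamma$, $s = a/\alpha + b/\beta + b/\gamma$, $t = a/\alpha + b/\beta + c/\gamma$, $u = b/\alpha + b/\beta + c/\gamma$. Then $a/t < b/u < a/r$ and $b/s < b/r < c/u < c/t$. -/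
theorem stmt_4 (a b c α β γ : ℝ) (ha : 0 < a) (hα : 0 < α) (hβ : 0 < β) (hγ : 0 < γ)
    (hab : a < b) (hbc : b < c) (hratio : b / a < c / b)
    (r s t u : ℝ)
    (hr : r = a / α + a / β + b / γ) (hs : s = a / α + b / β + b / γ)
    (ht : t = a / α + b / β + c / γ) (hu : u = b / α + b / β + c / γ) :
    a / t < b / u ∧ b / u < a / r ∧ b / s < b / r ∧ b / r < c / u ∧ c / u < c / t := by
  have hb : (0:ℝ) < b := ha.trans hab
  have hc : (0:ℝ) < c := hb.trans hbc
  have hx : (0:ℝ) < α⁻¹ := by positivity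
  have hy : (0:ℝ) < β⁻¹ := by positivity
  have hz : (0:ℝ) < γ⁻¹ := by positivity
  have hac : b * b < a * c := by
    rw [div_lt_div_iff₀ ha hb] at hratio; nlinarith
  simp only [div_eq_mul_inv] at hr hs ht hu
  subst hr hs ht hu
  have hrp : (0:ℝ) < a * α⁻¹ + a * β⁻¹ + b * γ⁻¹ := by positivity
  have hsp : (0:ℝ) < a * α⁻¹ + b * β⁻¹ + b * γ⁻¹ := by positivity
  have htp : (0:ℝ) < a * α⁻¹ + b * β⁻¹ + c * γ⁻¹ := by positivity
  have hup : (0:ℝ) < b * α⁻¹ + b * β⁻¹ + c * γ⁻¹ := by positivity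
  refine ⟨?_, ?_, ?_, ?_, ?_⟩
  · rw [div_lt_div_iff₀ htp hup]; nlinarith [mul_pos (mul_pos hb hy) (sub_pos.mpr hab),
      mul_pos (mul_pos hc hz) (sub_pos.mpr hab), mul_pos (mul_pos hc hx) (sub_pos.mpr hab),
      mul_pos hx (sub_pos.mpr hac), mul_pos hy (sub_pos.mpr hac), mul_pos hz (sub_pos.mpr hac)]
  · rw [div_lt_div_iff₀ hup hrp]; nlinarith [mul_pos (mul_pos hb hy) (sub_pos.mpr hab),
      mul_pos (mul_pos hc hz) (sub_pos.mpr hab), mul_pos (mul_pos hc hx) (sub_pos.mpr hab),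
      mul_pos hx (sub_pos.mpr hac), mul_pos hy (sub_pos.mpr hac), mul_pos hz (sub_pos.mpr hac)]
  · rw [div_lt_div_iff₀ hsp hrp]; nlinarith [mul_pos (mul_pos hb hy) (sub_pos.mpr hab),
      mul_pos (mul_pos hc hz) (sub_pos.mpr hab), mul_pos (mul_pos hc hx) (sub_pos.mpr hab),
      mul_pos hx (sub_pos.mpr hac), mul_pos hy (sub_pos.mpr hac), mul_pos hz (sub_pos.mpr hac)]
  · rw [div_lt_div_iff₀ hrp hup]; nlinarith [mul_pos (mul_pos hb hy) (sub_pos.mpr hab),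
      mul_pos (mul_pos hc hz) (sub_pos.mpr hab), mul_pos (mul_pos hc hx) (sub_pos.mpr hab),
      mul_pos hx (sub_pos.mpr hac), mul_pos hy (sub_pos.mpr hac), mul_pos hz (sub_pos.mpr hac)]
  · rw [div_lt_div_iff₀ hup htp]; nlinarith [mul_pos (mul_pos hb hy) (sub_pos.mpr hab),
      mul_pos (mul_pos hc hz) (sub_pos.mpr hab), mul_pos (mul_pos hc hx) (sub_pos.mpr hab),
      mul_pos hx (sub_pos.mpr hac), mul_pos hy (sub_pos.mpr hac), mul_pos hz (sub_pos.mpr hac)]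
end

section
/- Let $(a_m)_{m\in\mathbb{Z}} \in \Delta$ (i.e. $1 < a_{m+1}/a_m < a_{m+2}/a_{m+1}$ for all $m$, $a_m \to 0$ as $m\to-\infty$, and $a_{m+1}/a_m \to \infty$ as $m\to\infty$), let $\alpha,\beta,\gamma>0$, and let $(A,B,C)$ be the unique triplet of continuous piecewise linear functions on $(0,\infty)$ whose restriction to each $[r_m, r_{m+1}]$ is the basic construction with $a=a_m$, $b=a_{m+1}$, $c=a_{m+2}$, where $r_m = a_m/\alpha + a_m/\beta + a_{m+1}/\gamma$. Then $\lim_{q\to\infty} A(q) = \infty$, $\limsup_{q\to\infty} A(q)/q = 0$, and $\liminf_{q\to\infty} C(q)/q = \beta\gamma/(\beta+\gamma)$. -/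
open Filter Set

theorem stmt_8 (a : ℤ → ℝ) (ha : ∀ m, 0 < a m)
    (hΔ1 : ∀ m : ℤ, 1 < a (m + 1) / a m ∧ a (m + 1) / a m < a (m + 2) / a (m + 1))
    (hΔ2 : Tendsto a atBot (nhds 0))
    (hΔ3 : Tendsto (fun m => a (m + 1) / a m) atTop atTop)
    (α β γ : ℝ) (hα : 0 < α) (hβ : 0 < β) (hγ : 0 < γ)
    (r s t : ℤ → ℝ)
    (hr : ∀ m, r m = a m / α + a m / β + a (m + 1) / γ)
    (hs : ∀ m, s m = a m / α + a (m + 1) / β + a (m + 1) / γ)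
    (ht : ∀ m, t m = a m / α + a (m + 1) / β + a (m + 2) / γ)
    (A B C : ℝ → ℝ)
    (hA : ∀ m : ℤ, ∀ q ∈ Icc (r m) (r (m + 1)),
      A q = if q ≤ t m then a m else a m + α * (q - t m))
    (hB : ∀ m : ℤ, ∀ q ∈ Icc (r m) (r (m + 1)),
      B q = if q ≤ s m then a m + β * (q - r m) else a (m + 1))
    (hC : ∀ m : ℤ, ∀ q ∈ Icc (r m) (r (m + 1)),
      C q = if q ≤ s m then a (m + 1) else
        if q ≤ t m then a (m + 1) + γ * (q - s m) else a (m + 2)) :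
    Tendsto A atTop atTop ∧
    Filter.limsup (fun q => A q / q) atTop = 0 ∧
    Filter.liminf (fun q => C q / q) atTop = β * γ / (β + γ) := by
  -- basic monotonicity facts
  have ha1 : ∀ m : ℤ, a m < a (m + 1) := by
    intro m
    have h := (hΔ1 m).1
    rw [lt_div_iff₀ (ha m)] at h
    linarith
  have hmono : StrictMono a := strictMono_int_of_lt_succ ha1
  have hsq : ∀ m : ℤ, a (m + 1) * a (m + 1) ≤ a m * a (m + 2) := by
    intro m
    have h := (hΔ1 m).2
    rw [div_lt_div_iff₀ (ha m) (ha (m + 1))] at h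
    nlinarith
  -- a tends to infinity
  have hatop : Tendsto a atTop atTop := by
    obtain ⟨M, hM⟩ := eventually_atTop.1 (hΔ3.eventually_ge_atTop 2)
    have hgeo : ∀ k : ℕ, 2 ^ k * a M ≤ a (M + k) := by
      intro k
      induction k with
      | zero => simp
      | succ n ih =>
        have h2 : 2 ≤ a (M + n + 1) / a (M + n) := hM (M + n) (by omega)
        rw [le_div_iff₀ (ha (M + n))] at h2
        have e : M + ((n : ℤ) + 1) = M + n + 1 := by ring
        push_cast
        rw [e, pow_succ]
        nlinarith [ih, h2]
    rw [tendsto_atTop]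
    intro K
    obtain ⟨k, hk⟩ := pow_unbounded_of_one_lt (K / a M) (one_lt_two (α := ℝ))
    rw [div_lt_iff₀ (ha M)] at hk
    filter_upwards [eventually_ge_atTop (M + (k : ℤ))] with m hm
    calc K ≤ 2 ^ k * a M := by linarith
      _ ≤ a (M + k) := hgeo k
      _ ≤ a m := hmono.monotone hm
  -- order facts on r, s, t
  have hrpos : ∀ m : ℤ, 0 < r m := by
    intro m; rw [hr]; have := ha m; have := ha (m + 1); positivity
  have hspos : ∀ m : ℤ, 0 < s m := by
    intro m; rw [hs]; have := ha m; have := ha (m + 1); positivity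
  have hrs : ∀ m : ℤ, r m ≤ s m := by
    intro m; rw [hr, hs]
    have h := (ha1 m).le
    gcongr
  have hst : ∀ m : ℤ, s m ≤ t m := by
    intro m; rw [hs, ht]
    have h := (ha1 (m + 1)).le
    have e : m + 1 + 1 = m + 2 := by ring
    rw [e] at h
    gcongr
  have htr : ∀ m : ℤ, t m < r (m + 1) := by
    intro m; rw [ht, hr]
    have e : m + 1 + 1 = m + 2 := by ring
    rw [e]
    have h := ha1 m
    gcongr
  have hrlt : ∀ m : ℤ, r m < r (m + 1) := fun m =>
    lt_of_le_of_lt (le_trans (hrs m) (hst m)) (htr m)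
  have hrmono : StrictMono r := strictMono_int_of_lt_succ hrlt
  -- r tends to infinity
  have hrtop : Tendsto r atTop atTop := by
    apply tendsto_atTop_mono ?_ (hatop.atTop_div_const hα)
    intro m
    rw [hr]
    have h1 : 0 ≤ a m / β := div_nonneg (ha m).le hβ.le
    have h2 : 0 ≤ a (m + 1) / γ := div_nonneg (ha (m + 1)).le hγ.le
    linarith
  have hstop : Tendsto s atTop atTop := tendsto_atTop_mono hrs hrtop
  -- locating a point in the decomposition
  have hloc : ∀ q : ℝ, r 0 ≤ q → ∃ m : ℤ, r m ≤ q ∧ q ≤ r (m + 1) ∧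
      ∀ k : ℤ, r k ≤ q → k ≤ m := by
    intro q hq
    obtain ⟨N, hN⟩ := (hrtop.eventually_gt_atTop q).exists
    have hbdd : ∀ z : ℤ, r z ≤ q → z ≤ N := by
      intro z hz
      by_contra h
      push_neg at h
      exact absurd (lt_of_lt_of_le (hrmono h) hz) (not_lt.2 hN.le)
    obtain ⟨m, hmP, hmax⟩ := Int.exists_greatest_of_bdd ⟨N, hbdd⟩ ⟨0, hq⟩
    refine ⟨m, hmP, ?_, hmax⟩
    by_contra h
    push_neg at h
    exact absurd (hmax (m + 1) h.le) (by omega)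
  -- transfer of eventual properties
  have hev : ∀ (P : ℝ → Prop) (M : ℤ),
      (∀ m : ℤ, M ≤ m → ∀ q ∈ Icc (r m) (r (m + 1)), P q) → ∀ᶠ q in atTop, P q := by
    intro P M hP
    filter_upwards [eventually_ge_atTop (max (r 0) (r M))] with q hq
    obtain ⟨m, hm1, hm2, hm3⟩ := hloc q (le_trans (le_max_left _ _) hq)
    exact hP m (hm3 M (le_trans (le_max_right _ _) hq)) q ⟨hm1, hm2⟩
  -- lower bound for A
  have hAlb : ∀ m : ℤ, ∀ q ∈ Icc (r m) (r (m + 1)), a m ≤ A q := by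
    intro m q hq
    rw [hA m q hq]
    split
    · exact le_refl _
    · rename_i h
      push_neg at h
      nlinarith
  -- Part 1 : A tends to infinity
  have h1 : Tendsto A atTop atTop := by
    rw [tendsto_atTop]
    intro K
    obtain ⟨M, hM⟩ := eventually_atTop.1 (hatop.eventually_ge_atTop K)
    exact hev (fun q => K ≤ A q) M fun m hm q hq => le_trans (hM m hm) (hAlb m q hq)
  -- upper bound for A
  have hAub : ∀ m : ℤ, ∀ q ∈ Icc (r m) (r (m + 1)), A q * a (m + 1) ≤ γ * a m * q := by
    intro m q hq
    obtain ⟨hq1, hq2⟩ := hq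
    have hrm : a (m + 1) / γ ≤ r m := by
      rw [hr]
      have h1 : 0 ≤ a m / α := div_nonneg (ha m).le hα.le
      have h2 : 0 ≤ a m / β := div_nonneg (ha m).le hβ.le
      linarith
    rw [hA m q ⟨hq1, hq2⟩]
    split
    · rename_i h
      rw [div_le_iff₀ hγ] at hrm
      nlinarith [mul_le_mul_of_nonneg_left hq1 (mul_pos hγ (ha m)).le,
        mul_le_mul_of_nonneg_left hrm (ha m).le]
    · rename_i h
      push_neg at h
      have htub : a (m + 2) / γ ≤ t m := by
        rw [ht]
        have h1 : 0 ≤ a m / α := div_nonneg (ha m).le hα.le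
        have h2 : 0 ≤ a (m + 1) / β := div_nonneg (ha (m + 1)).le hβ.le
        linarith
      rw [div_le_iff₀ hγ] at htub
      have h5 : α * (q - t m) ≤ a (m + 1) - a m := by
        have e : m + 1 + 1 = m + 2 := by ring
        have hre : r (m + 1) = t m + (a (m + 1) - a m) / α := by
          rw [hr, ht, e]; field_simp; ring
        rw [hre] at hq2
        have : q - t m ≤ (a (m + 1) - a m) / α := by linarith
        rw [le_div_iff₀ hα] at this
        linarith
      have h6 : a (m + 2) ≤ γ * q := by nlinarith
      nlinarith [hsq m, ha m, ha (m + 1), mul_le_mul_of_nonneg_right h5 (ha (m + 1)).le,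
        mul_le_mul_of_nonneg_left h6 (ha m).le]
  -- Part 2 : limsup A/q = 0
  have h2' : Tendsto (fun q => A q / q) atTop (nhds 0) := by
    rw [tendsto_order]
    constructor
    · intro x hx
      apply Eventually.mono (hev (fun q => 0 ≤ A q / q) 0 ?_)
      · intro q hq; linarith
      · intro m hm q hq
        have hq0 : 0 < q := lt_of_lt_of_le (hrpos m) hq.1
        exact div_nonneg (le_trans (ha m).le (hAlb m q hq)) hq0.le
    · intro ε hε
      obtain ⟨M, hM⟩ := eventually_atTop.1 (hΔ3.eventually_gt_atTop (γ / ε))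
      apply hev (fun q => A q / q < ε) M
      intro m hm q hq
      have hq0 : 0 < q := lt_of_lt_of_le (hrpos m) hq.1
      have hrat := hM m hm
      rw [div_lt_div_iff₀ hε (ha m)] at hrat
      have hub := hAub m q hq
      rw [div_lt_iff₀ hq0]
      nlinarith [ha (m + 1), hq0]
  have h2 : Filter.limsup (fun q => A q / q) atTop = 0 := h2'.limsup_eq
  -- Part 3 : liminf C/q = βγ/(β+γ)
  set L := β * γ / (β + γ) with hL
  have hLpos : 0 < L := by rw [hL]; positivity
  -- the key sequence g m = a (m+1) / s m
  set g : ℤ → ℝ := fun m => a (m + 1) / s m with hg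
  have hgpos : ∀ m : ℤ, 0 < g m := fun m => div_pos (ha (m + 1)) (hspos m)
  have hgL : ∀ m : ℤ, g m < L := by
    intro m
    rw [hg, hL]
    rw [div_lt_div_iff₀ (hspos m) (by positivity)]
    rw [hs]
    have h0 : 0 < a m / α := div_pos (ha m) hα
    have e1 : β * γ * (a m / α + a (m + 1) / β + a (m + 1) / γ)
        = β * γ * (a m / α) + γ * a (m + 1) + β * a (m + 1) := by
      field_simp
    nlinarith [mul_pos (mul_pos hβ hγ) h0]
  have hsg : ∀ m : ℤ, a (m + 1) / γ ≤ s m := by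
    intro m
    rw [hs]
    have h1 : 0 ≤ a m / α := div_nonneg (ha m).le hα.le
    have h2 : 0 ≤ a (m + 1) / β := div_nonneg (ha (m + 1)).le hβ.le
    linarith
  -- g tends to L
  have hρ : Tendsto (fun m => a m / a (m + 1)) atTop (nhds 0) := by
    have := tendsto_inv_atTop_zero.comp hΔ3
    apply this.congr
    intro m
    simp only [Function.comp_apply, inv_div]
  have hgtend : Tendsto g atTop (nhds L) := by
    have hsum : Tendsto (fun m => a m / a (m + 1) / α + (1 / β + 1 / γ)) atTop
        (nhds (0 / α + (1 / β + 1 / γ))) := (hρ.div_const α).add_const _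
    rw [zero_div, zero_add] at hsum
    have hne : (0:ℝ) < 1 / β + 1 / γ := by positivity
    have hinv := hsum.inv₀ hne.ne'
    have hLeq : (1 / β + 1 / γ)⁻¹ = L := by
      rw [hL]
      rw [div_add_div _ _ hβ.ne' hγ.ne']
      rw [one_mul, mul_one, inv_div]
      rw [add_comm γ β]
    rw [hLeq] at hinv
    apply hinv.congr
    intro m
    have hsm : s m = a (m + 1) * (a m / a (m + 1) / α + (1 / β + 1 / γ)) := by
      rw [hs]; field_simp [hα.ne', hβ.ne', hγ.ne', (ha (m + 1)).ne']; ring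
    rw [hg]
    simp only
    rw [hsm, div_mul_cancel_left₀ (ha (m + 1)).ne']
  -- lower bound for C
  have hClb : ∀ m : ℤ, ∀ q ∈ Icc (r m) (r (m + 1)), min (g m) (g (m + 1)) * q ≤ C q := by
    intro m q hq
    obtain ⟨hq1, hq2⟩ := hq
    have hq0 : 0 < q := lt_of_lt_of_le (hrpos m) hq1
    rw [hC m q ⟨hq1, hq2⟩]
    split
    · rename_i h
      calc min (g m) (g (m + 1)) * q ≤ g m * q := by
            apply mul_le_mul_of_nonneg_right (min_le_left _ _) hq0.le
        _ ≤ g m * s m := mul_le_mul_of_nonneg_left h (hgpos m).le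
        _ = a (m + 1) := div_mul_cancel₀ _ (hspos m).ne'
    · rename_i h
      push_neg at h
      split
      · rename_i h'
        have key : g m * q ≤ a (m + 1) + γ * (q - s m) := by
          rw [hg]
          simp only
          rw [div_mul_eq_mul_div, div_le_iff₀ (hspos m)]
          have hγs : a (m + 1) ≤ γ * s m := by
            have := hsg m
            rw [div_le_iff₀ hγ] at this
            linarith
          nlinarith
        calc min (g m) (g (m + 1)) * q ≤ g m * q :=
              mul_le_mul_of_nonneg_right (min_le_left _ _) hq0.le
          _ ≤ a (m + 1) + γ * (q - s m) := key
      · rename_i h'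
        have e : m + 1 + 1 = m + 2 := by ring
        have hq2' : q ≤ s (m + 1) := le_trans hq2 (hrs (m + 1))
        calc min (g m) (g (m + 1)) * q ≤ g (m + 1) * q :=
              mul_le_mul_of_nonneg_right (min_le_right _ _) hq0.le
          _ ≤ g (m + 1) * s (m + 1) := mul_le_mul_of_nonneg_left hq2' (hgpos (m + 1)).le
          _ = a (m + 1 + 1) := div_mul_cancel₀ _ (hspos (m + 1)).ne'
          _ = a (m + 2) := by rw [e]
  -- frequently C q / q ≤ L
  have hfreq : ∃ᶠ q in atTop, C q / q ≤ L := by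
    rw [frequently_atTop]
    intro N
    obtain ⟨m, hm⟩ := (hstop.eventually_ge_atTop N).exists
    refine ⟨s m, hm, ?_⟩
    have hmem : s m ∈ Icc (r m) (r (m + 1)) :=
      ⟨hrs m, le_trans (hst m) (htr m).le⟩
    rw [hC m (s m) hmem, if_pos (le_refl _)]
    exact (hgL m).le
  -- liminf ≤ L
  have hbdd : IsBoundedUnder (· ≥ ·) atTop (fun q => C q / q) := by
    apply isBoundedUnder_of_eventually_ge (a := 0)
    apply hev (fun q => 0 ≤ C q / q) 0
    intro m hm q hq
    have hq0 : 0 < q := lt_of_lt_of_le (hrpos m) hq.1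
    have hge : min (g m) (g (m + 1)) * q ≤ C q := hClb m q hq
    have hmin : 0 < min (g m) (g (m + 1)) := lt_min (hgpos m) (hgpos (m + 1))
    have h0 : 0 ≤ C q := le_trans (by positivity) hge
    exact div_nonneg h0 hq0.le
  have hle : Filter.liminf (fun q => C q / q) atTop ≤ L :=
    liminf_le_of_frequently_le hfreq hbdd
  -- liminf ≥ L
  have hcob : IsCoboundedUnder (· ≥ ·) atTop (fun q => C q / q) :=
    IsCoboundedUnder.of_frequently_le hfreq
  have hge : L ≤ Filter.liminf (fun q => C q / q) atTop := by
    apply le_of_forall_sub_le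
    intro ε hε
    apply le_liminf_of_le hcob
    obtain ⟨M, hM⟩ := eventually_atTop.1 (hgtend.eventually (eventually_ge_nhds
      (show L - ε < L by linarith)))
    apply hev (fun q => L - ε ≤ C q / q) M
    intro m hm q hq
    have hq0 : 0 < q := lt_of_lt_of_le (hrpos m) hq.1
    have hmin : L - ε ≤ min (g m) (g (m + 1)) :=
      le_min (hM m hm) (hM (m + 1) (by omega))
    rw [le_div_iff₀ hq0]
    calc (L - ε) * q ≤ min (g m) (g (m + 1)) * q :=
          mul_le_mul_of_nonneg_right hmin hq0.le
      _ ≤ C q := hClb m q hq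
  exact ⟨h1, h2, le_antisymm hle hge⟩
end

section
/- Let $n \ge 2$ and $2 \le k \le n$ be integers, and let $\mathbf{P}$ be the map $(0,\infty)\to\mathbb{R}^{n+1}$ constructed from $\alpha=1/(k-1)$, $\beta=1$, $\gamma=1/(n+1-k)$ and a sequence in $\Delta$ (with $P_1=\cdots=P_{k-1}=A$, $P_k=B$, $P_{k+1}=\cdots=P_{n+1}=C$). Then $\lim_{q\to\infty} P_1(q)=\infty$, $\limsup_{q\to\infty} P_{k-1}(q)/q = 0$, and $\liminf_{q\to\infty} P_{k+1}(q)/q = 1/(n-k+2)$. -/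
open Filter Set

private lemma lin_interp_le (c al w v t r q : ℝ) (ht : t ≤ q) (hr : q ≤ r)
    (h1 : c * w ≤ v * t) (h2 : (c + al * (r - t)) * w ≤ v * r) :
    (c + al * (q - t)) * w ≤ v * q := by
  rcases le_total (al * w) v with h | h
  · nlinarith [mul_nonneg (sub_nonneg.2 ht) (sub_nonneg.2 h)]
  · nlinarith [mul_nonneg (sub_nonneg.2 hr) (sub_nonneg.2 h)]

private lemma lin_interp_ge (c al w v t r q : ℝ) (ht : t ≤ q) (hr : q ≤ r)
    (h1 : v * t ≤ c * w) (h2 : v * r ≤ (c + al * (r - t)) * w) :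
    v * q ≤ (c + al * (q - t)) * w := by
  rcases le_total (al * w) v with h | h
  · nlinarith [mul_nonneg (sub_nonneg.2 hr) (sub_nonneg.2 h)]
  · nlinarith [mul_nonneg (sub_nonneg.2 ht) (sub_nonneg.2 h)]

private lemma tendsto_a_atTop (a : ℤ → ℝ) (ha : ∀ m, 0 < a m) (hmono : Monotone a)
    (h : Tendsto (fun m => a (m + 1) / a m) atTop atTop) : Tendsto a atTop atTop := by
  rw [tendsto_atTop]
  intro b
  obtain ⟨M, hM⟩ := eventually_atTop.1 (h.eventually_ge_atTop 2)
  have hd : ∀ j : ℕ, 2 ^ j * a M ≤ a (M + j) := by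
    intro j
    induction j with
    | zero => simp
    | succ j ih =>
      have h2 := hM (M + j) (by omega)
      rw [le_div_iff₀ (ha (M + j))] at h2
      have hcast : (M : ℤ) + ((j : ℕ) + 1 : ℕ) = (M + j) + 1 := by push_cast; ring
      rw [hcast]
      calc (2:ℝ) ^ (j+1) * a M = 2 * (2 ^ j * a M) := by ring
        _ ≤ 2 * a (M + j) := by linarith
        _ ≤ a (M + j + 1) := by linarith
  obtain ⟨j, hj⟩ := pow_unbounded_of_one_lt (b / a M) (by norm_num : (1:ℝ) < 2)
  have hb : b ≤ 2 ^ j * a M := by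
    rw [div_lt_iff₀ (ha M)] at hj; linarith
  exact eventually_atTop.2 ⟨M + j, fun m hm => hb.trans ((hd j).trans (hmono hm))⟩

set_option maxHeartbeats 1000000 in
theorem stmt_10 (n k : ℕ) (hn : 2 ≤ n) (hk1 : 2 ≤ k) (hk2 : k ≤ n)
    (α β γ : ℝ) (hαdef : α = 1 / ((k : ℝ) - 1)) (hβdef : β = 1)
    (hγdef : γ = 1 / ((n : ℝ) + 1 - k))
    (a : ℤ → ℝ) (ha : ∀ m, 0 < a m)
    (hΔ1 : ∀ m : ℤ, 1 < a (m + 1) / a m ∧ a (m + 1) / a m < a (m + 2) / a (m + 1))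
    (hΔ2 : Tendsto a atBot (nhds 0))
    (hΔ3 : Tendsto (fun m => a (m + 1) / a m) atTop atTop)
    (r s t : ℤ → ℝ)
    (hr : ∀ m, r m = a m / α + a m / β + a (m + 1) / γ)
    (hs : ∀ m, s m = a m / α + a (m + 1) / β + a (m + 1) / γ)
    (ht : ∀ m, t m = a m / α + a (m + 1) / β + a (m + 2) / γ)
    (A B C : ℝ → ℝ)
    (hA : ∀ m : ℤ, ∀ q ∈ Icc (r m) (r (m + 1)),
      A q = if q ≤ t m then a m else a m + α * (q - t m))
    (hB : ∀ m : ℤ, ∀ q ∈ Icc (r m) (r (m + 1)),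
      B q = if q ≤ s m then a m + β * (q - r m) else a (m + 1))
    (hC : ∀ m : ℤ, ∀ q ∈ Icc (r m) (r (m + 1)),
      C q = if q ≤ s m then a (m + 1) else
        if q ≤ t m then a (m + 1) + γ * (q - s m) else a (m + 2))
    (P : ℕ → ℝ → ℝ)
    (hP : ∀ j, 1 ≤ j → j ≤ n + 1 →
      (j ≤ k - 1 → P j = A) ∧ (j = k → P j = B) ∧ (k + 1 ≤ j → P j = C)) :
    Tendsto (fun q => P 1 q) atTop atTop ∧
    Filter.limsup (fun q => P (k - 1) q / q) atTop = 0 ∧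
    Filter.liminf (fun q => P (k + 1) q / q) atTop = 1 / ((n : ℝ) - k + 2) := by
  classical
  have hkR : (2:ℝ) ≤ (k:ℝ) := by exact_mod_cast hk1
  have hnkR : (k:ℝ) ≤ (n:ℝ) := by exact_mod_cast hk2
  set K := (k:ℝ) - 1 with hKdef
  set D := (n:ℝ) + 1 - (k:ℝ) with hDdef
  have hK1 : (1:ℝ) ≤ K := by rw [hKdef]; linarith
  have hD1 : (1:ℝ) ≤ D := by rw [hDdef]; linarith
  have hK0 : (0:ℝ) < K := by linarith
  have hD0 : (0:ℝ) < D := by linarith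
  have hα0 : 0 < α := by rw [hαdef]; positivity
  have hγ0 : 0 < γ := by rw [hγdef]; positivity
  have hmonoa : ∀ m : ℤ, a m < a (m + 1) := by
    intro m
    have h := (hΔ1 m).1
    rw [lt_div_iff₀ (ha m)] at h
    linarith
  have hmonoa2 : ∀ m : ℤ, a (m + 1) < a (m + 2) := by
    intro m
    have h := hmonoa (m + 1)
    rwa [show m + 1 + 1 = m + 2 from by ring] at h
  have hmono2 : Monotone a := monotone_int_of_le_succ fun m => (hmonoa m).le
  have hratm : ∀ m : ℤ, a (m + 1) * a (m + 1) < a m * a (m + 2) := by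
    intro m
    have h := (hΔ1 m).2
    rw [div_lt_div_iff₀ (ha m) (ha (m + 1))] at h
    linarith
  have hr' : ∀ m : ℤ, r m = (K + 1) * a m + D * a (m + 1) := by
    intro m
    rw [hr m, hαdef, hβdef, hγdef, div_one]
    field_simp
  have hs' : ∀ m : ℤ, s m = K * a m + (D + 1) * a (m + 1) := by
    intro m
    rw [hs m, hαdef, hβdef, hγdef, div_one]
    field_simp
    ring
  have ht' : ∀ m : ℤ, t m = K * a m + a (m + 1) + D * a (m + 2) := by
    intro m
    rw [ht m, hαdef, hβdef, hγdef, div_one]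
    field_simp
  have hr2 : ∀ m : ℤ, r (m + 1) = (K + 1) * a (m + 1) + D * a (m + 2) := by
    intro m
    rw [hr' (m + 1), show m + 1 + 1 = m + 2 from by ring]
  have hrs : ∀ m : ℤ, r m ≤ s m := by
    intro m; rw [hr' m, hs' m]; linarith [hmonoa m]
  have hst : ∀ m : ℤ, s m ≤ t m := by
    intro m; rw [hs' m, ht' m]
    nlinarith [mul_le_mul_of_nonneg_left (hmonoa2 m).le hD0.le]
  have htr : ∀ m : ℤ, t m ≤ r (m + 1) := by
    intro m; rw [ht' m, hr2 m]
    nlinarith [mul_le_mul_of_nonneg_left (hmonoa m).le hK0.le]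
  have hrpos : ∀ m : ℤ, 0 < r m := by
    intro m; rw [hr' m]; nlinarith [ha m, ha (m + 1)]
  have ha1r : ∀ m : ℤ, a (m + 1) ≤ r m := by
    intro m; rw [hr' m]; nlinarith [ha m, ha (m + 1), hD1, hK0]
  have hta : ∀ m : ℤ, a (m + 1) ≤ t m := by
    intro m; rw [ht' m]
    nlinarith [ha m, ha (m + 1), ha (m + 2), hK0, hD0]
  have hatop : Tendsto a atTop atTop := tendsto_a_atTop a ha hmono2 hΔ3
  have hrtop : Tendsto r atTop atTop := by
    apply tendsto_atTop_mono (fun m => ?_) hatop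
    rw [hr' m]; nlinarith [ha m, ha (m + 1), hK0, hD0]
  have hcover : ∀ (m₀ : ℤ) (q : ℝ), r m₀ ≤ q → ∃ m, m₀ ≤ m ∧ q ∈ Icc (r m) (r (m + 1)) := by
    intro m₀ q hq
    obtain ⟨M, hM⟩ := eventually_atTop.1 (hrtop.eventually_ge_atTop (q + 1))
    have Hbdd : ∃ b : ℤ, ∀ z : ℤ, r z ≤ q → z ≤ b := by
      refine ⟨M, fun z hz => ?_⟩
      by_contra hzM
      push_neg at hzM
      have := hM z hzM.le
      linarith
    obtain ⟨m, hm1, hm2⟩ := Int.exists_greatest_of_bdd Hbdd ⟨m₀, hq⟩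
    refine ⟨m, hm2 m₀ hq, mem_Icc.2 ⟨hm1, ?_⟩⟩
    by_contra hle
    push_neg at hle
    have := hm2 (m + 1) hle.le
    omega
  have hsmall : ∀ δ : ℝ, 0 < δ → ∃ m₀ : ℤ, ∀ m ≥ m₀, a m ≤ δ * a (m + 1) := by
    intro δ hδ
    obtain ⟨m₀, h⟩ := eventually_atTop.1 (hΔ3.eventually_ge_atTop (1 / δ))
    refine ⟨m₀, fun m hm => ?_⟩
    have h2 := h m hm
    rw [div_le_div_iff₀ hδ (ha m)] at h2
    linarith
  have hP1 : P 1 = A := (hP 1 (by omega) (by omega)).1 (by omega)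
  have hPk1 : P (k - 1) = A := (hP (k - 1) (by omega) (by omega)).1 (by omega)
  have hPk2 : P (k + 1) = C := (hP (k + 1) (by omega) (by omega)).2.2 (by omega)
  refine ⟨?_, ?_, ?_⟩
  · -- Part 1
    rw [hP1, tendsto_atTop]
    intro b
    obtain ⟨M, hM⟩ := eventually_atTop.1 (hatop.eventually_ge_atTop b)
    filter_upwards [eventually_ge_atTop (r M)] with q hq
    obtain ⟨m, hm, hmem⟩ := hcover M q hq
    rw [hA m q hmem]
    split_ifs with h
    · exact hM m hm
    · push_neg at h
      have h2 : 0 ≤ α * (q - t m) := mul_nonneg hα0.le (by linarith)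
      linarith [hM m hm]
  · -- Part 2
    rw [hPk1]
    have htend : Tendsto (fun q => A q / q) atTop (nhds 0) := by
      rw [Metric.tendsto_nhds]
      intro ε hε
      obtain ⟨m₀, hm₀⟩ := hsmall (ε / 2) (by linarith)
      filter_upwards [eventually_ge_atTop (r m₀)] with q hq
      obtain ⟨m, hm, hmem⟩ := hcover m₀ q hq
      have hq0 : 0 < q := lt_of_lt_of_le (hrpos m) hmem.1
      have hA1 : A q * a (m + 1) ≤ a m * q := by
        rw [hA m q hmem]
        split_ifs with h
        · nlinarith [ha1r m, ha m, hmem.1]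
        · push_neg at h
          have heq : a m + α * (r (m + 1) - t m) = a (m + 1) := by
            rw [hr2 m, ht' m, hαdef]
            field_simp
            ring
          have h1 : a m * a (m + 1) ≤ a m * t m :=
            mul_le_mul_of_nonneg_left (hta m) (ha m).le
          have h2 : (a m + α * (r (m + 1) - t m)) * a (m + 1) ≤ a m * r (m + 1) := by
            rw [heq, hr2 m]
            nlinarith [hratm m,
              mul_nonneg (mul_nonneg (by linarith : (0:ℝ) ≤ K + 1) (ha m).le) (ha (m + 1)).le,
              mul_nonneg (mul_nonneg (by linarith : (0:ℝ) ≤ D - 1) (ha m).le) (ha (m + 2)).le]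
          exact lin_interp_le (a m) α (a (m + 1)) (a m) (t m) (r (m + 1)) q h.le hmem.2 h1 h2
      have hsm : a m ≤ ε / 2 * a (m + 1) := hm₀ m hm
      have hA2 : A q ≤ ε / 2 * q := by
        have h3 : a m * q ≤ (ε / 2 * a (m + 1)) * q :=
          mul_le_mul_of_nonneg_right hsm hq0.le
        have h4 : A q * a (m + 1) ≤ (ε / 2 * q) * a (m + 1) := by nlinarith
        exact le_of_mul_le_mul_right h4 (ha (m + 1))
      have hApos : 0 < A q := by
        rw [hA m q hmem]
        split_ifs with h
        · exact ha m
        · push_neg at h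
          nlinarith [ha m, mul_nonneg hα0.le (sub_pos.2 h).le]
      rw [Real.dist_eq, sub_zero, abs_of_pos (div_pos hApos hq0), div_lt_iff₀ hq0]
      nlinarith [hA2, hq0, hε]
    exact htend.limsup_eq
  · -- Part 3
    rw [hPk2]
    set L : ℝ := 1 / (D + 1) with hLdef
    have hD1pos : (0:ℝ) < D + 1 := by linarith
    have hL0 : 0 < L := by rw [hLdef]; positivity
    have hLD : L * (D + 1) = 1 := by rw [hLdef]; field_simp
    have hev : ∀ ε : ℝ, 0 < ε → ∀ᶠ q in atTop, L - ε ≤ C q / q := by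
      intro ε hε
      set δ : ℝ := min (1 / (K + 1)) (ε / K) with hδdef
      have hδ0 : 0 < δ := lt_min (by positivity) (by positivity)
      have hδK1 : (K + 1) * δ ≤ 1 := by
        have h := min_le_left (1 / (K + 1)) (ε / K)
        rw [← hδdef] at h
        rw [le_div_iff₀ (by linarith : (0:ℝ) < K + 1)] at h
        linarith
      have hδε : K * δ ≤ ε := by
        have h := min_le_right (1 / (K + 1)) (ε / K)
        rw [← hδdef] at h
        rw [le_div_iff₀ hK0] at h
        linarith
      set X : ℝ := K * δ + D + 1 with hXdef
      have hX0 : (0:ℝ) < X := by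
        rw [hXdef]; nlinarith [mul_pos hK0 hδ0]
      have hL2 : 2 * L ≤ 1 := by nlinarith [hLD, hL0, hD1]
      have hLX : (L - ε) * X ≤ 1 := by
        rw [hXdef]
        nlinarith [hL2, mul_pos hK0 hδ0, hδε, hε, hD0, hLD, hL0]
      obtain ⟨m₀, hm₀⟩ := hsmall δ hδ0
      filter_upwards [eventually_ge_atTop (r m₀)] with q hq
      obtain ⟨m, hm, hmem⟩ := hcover m₀ q hq
      have hq0 : 0 < q := lt_of_lt_of_le (hrpos m) hmem.1
      have hu1 : a m ≤ δ * a (m + 1) := hm₀ m hm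
      have hu2 : a (m + 1) ≤ δ * a (m + 2) := by
        have h := hm₀ (m + 1) (by omega)
        rwa [show m + 1 + 1 = m + 2 from by ring] at h
      have h6 : s m ≤ a (m + 1) * X := by
        rw [hs' m, hXdef]
        nlinarith [hu1, hK0, ha (m + 1)]
      rw [le_div_iff₀ hq0, hC m q hmem]
      split_ifs with h1 h2
      · have h9 : (L - ε) * q * X ≤ a (m + 1) * X := by
          calc (L - ε) * q * X = ((L - ε) * X) * q := by ring
            _ ≤ 1 * q := mul_le_mul_of_nonneg_right hLX hq0.le
            _ = q := one_mul q
            _ ≤ s m := h1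
            _ ≤ a (m + 1) * X := h6
        exact le_of_mul_le_mul_right h9 hX0
      · push_neg at h1
        have hγts : a (m + 1) + γ * (t m - s m) = a (m + 2) := by
          rw [hs' m, ht' m, hγdef]
          field_simp
          ring
        have hk2' : a (m + 1) * t m ≤ (a (m + 1) + γ * (t m - s m)) * s m := by
          rw [hγts, hs' m, ht' m]
          nlinarith [mul_nonneg (mul_nonneg hK0.le (ha m).le) (sub_nonneg.2 (hmonoa2 m).le),
            mul_nonneg (ha (m + 1)).le (sub_nonneg.2 (hmonoa2 m).le)]
        have hkey : a (m + 1) * q ≤ (a (m + 1) + γ * (q - s m)) * s m :=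
          lin_interp_ge (a (m + 1)) γ (s m) (a (m + 1)) (s m) (t m) q h1.le h2 le_rfl hk2'
        have hCq : 0 ≤ a (m + 1) + γ * (q - s m) := by
          nlinarith [ha (m + 1), mul_nonneg hγ0.le (by linarith : (0:ℝ) ≤ q - s m)]
        have h8 : (a (m + 1) + γ * (q - s m)) * s m ≤
            (a (m + 1) + γ * (q - s m)) * (a (m + 1) * X) :=
          mul_le_mul_of_nonneg_left h6 hCq
        have hqX : q * a (m + 1) ≤ (a (m + 1) + γ * (q - s m)) * X * a (m + 1) := by
          nlinarith [hkey, h8]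
        have hq_le : q ≤ (a (m + 1) + γ * (q - s m)) * X :=
          le_of_mul_le_mul_right hqX (ha (m + 1))
        have h9 : (L - ε) * q * X ≤ (a (m + 1) + γ * (q - s m)) * X := by
          calc (L - ε) * q * X = ((L - ε) * X) * q := by ring
            _ ≤ 1 * q := mul_le_mul_of_nonneg_right hLX hq0.le
            _ = q := one_mul q
            _ ≤ (a (m + 1) + γ * (q - s m)) * X := hq_le
        exact le_of_mul_le_mul_right h9 hX0
      · push_neg at h1 h2
        have h10 : r (m + 1) ≤ (D + 1) * a (m + 2) := by
          rw [hr2 m]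
          have hh1 : (K + 1) * a (m + 1) ≤ (K + 1) * (δ * a (m + 2)) :=
            mul_le_mul_of_nonneg_left hu2 (by linarith)
          have hh2 : (K + 1) * δ * a (m + 2) ≤ 1 * a (m + 2) :=
            mul_le_mul_of_nonneg_right hδK1 (ha (m + 2)).le
          nlinarith [hh1, hh2]
        have hq' : q ≤ (D + 1) * a (m + 2) := le_trans hmem.2 h10
        have h12 : L * ((D + 1) * a (m + 2)) = a (m + 2) := by
          rw [← mul_assoc, hLD, one_mul]
        have h11 : L * q ≤ a (m + 2) := by
          linarith [mul_le_mul_of_nonneg_left hq' hL0.le, h12]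
        nlinarith [h11, mul_pos hε hq0]
    have hbdd_above : IsBoundedUnder (· ≤ ·) atTop (fun q => C q / q) := by
      refine ⟨2, ?_⟩
      rw [eventually_map]
      filter_upwards [eventually_ge_atTop (r 0)] with q hq
      obtain ⟨m, hm, hmem⟩ := hcover 0 q hq
      have hq0 : 0 < q := lt_of_lt_of_le (hrpos m) hmem.1
      rw [div_le_iff₀ hq0, hC m q hmem]
      split_ifs with h1 h2
      · linarith only [ha1r m, hmem.1, hq0]
      · push_neg at h1
        have hγ1 : γ ≤ 1 := by
          rw [hγdef, div_le_one hD0]; linarith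
        have hsm0 : 0 < s m := lt_of_lt_of_le (hrpos m) (hrs m)
        linarith only [ha1r m, hmem.1, hsm0,
          mul_nonneg (by linarith only [hγ1] : (0:ℝ) ≤ 1 - γ) (by linarith only [h1] : (0:ℝ) ≤ q - s m)]
      · push_neg at h1 h2
        have hta2 : a (m + 2) ≤ t m := by
          rw [ht' m]
          linarith only [mul_nonneg (by linarith only [hD1] : (0:ℝ) ≤ D - 1) (ha (m + 2)).le,
            mul_nonneg hK0.le (ha m).le, ha (m + 1)]
        linarith only [hta2, h2, hq0]
    have hbdd_below : IsBoundedUnder (· ≥ ·) atTop (fun q => C q / q) := by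
      refine ⟨0, ?_⟩
      rw [eventually_map]
      filter_upwards [eventually_ge_atTop (r 0)] with q hq
      obtain ⟨m, hm, hmem⟩ := hcover 0 q hq
      have hq0 : 0 < q := lt_of_lt_of_le (hrpos m) hmem.1
      simp only [ge_iff_le]
      apply div_nonneg _ hq0.le
      rw [hC m q hmem]
      split_ifs with h1 h2
      · exact (ha (m + 1)).le
      · push_neg at h1
        linarith only [ha (m + 1), mul_nonneg hγ0.le (by linarith only [h1] : (0:ℝ) ≤ q - s m)]
      · exact (ha (m + 2)).le
    have hcobdd : IsCoboundedUnder (· ≥ ·) atTop (fun q => C q / q) :=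
      hbdd_above.isCoboundedUnder_ge
    have h_lo : L ≤ liminf (fun q => C q / q) atTop := by
      refine le_of_forall_pos_le_add fun ε hε => ?_
      have h := le_liminf_of_le hcobdd (hev ε hε)
      linarith only [h]
    have h_up : liminf (fun q => C q / q) atTop ≤ L := by
      apply liminf_le_of_frequently_le _ hbdd_below
      rw [frequently_atTop]
      intro b
      obtain ⟨M, hM⟩ := eventually_atTop.1 (hatop.eventually_ge_atTop b)
      refine ⟨s M, ?_, ?_⟩
      · have hh : a M ≤ s M := by
          rw [hs' M]
          linarith only [mul_nonneg (by linarith only [hK1] : (0:ℝ) ≤ K - 1) (ha M).le,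
            mul_nonneg (by linarith only [hD0] : (0:ℝ) ≤ D + 1) (ha (M + 1)).le, ha M]
        linarith only [hM M le_rfl, hh]
      · have hmem : s M ∈ Icc (r M) (r (M + 1)) := mem_Icc.2 ⟨hrs M, le_trans (hst M) (htr M)⟩
        rw [hC M (s M) hmem, if_pos le_rfl]
        have hsM0 : 0 < s M := lt_of_lt_of_le (hrpos M) (hrs M)
        rw [hLdef, div_le_div_iff₀ hsM0 hD1pos]
        rw [hs' M]
        linarith only [mul_nonneg hK0.le (ha M).le]
    have hfin : liminf (fun q => C q / q) atTop = L := le_antisymm h_up h_lo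
    rw [hfin, hLdef, hDdef]
    ring_nf
end

section
/- Let $n \ge 2$ and let $\xi \in \mathbb{R}^{n+1}$ be nonzero. For $q \ge 0$ and $1 \le j \le n+1$, let $L_{\xi,j}(q) = \log \lambda_j(\mathcal{C}_\xi(e^q); \mathbb{Z}^{n+1})$, where $\mathcal{C}_\xi(Q) = \{x \in \mathbb{R}^{n+1} : \|x\| \le 1, |x\cdot\xi| \le Q^{-1}\}$ and $\lambda_j$ denotes the $j$-th successive minimum. Suppose $q \mapsto q - \sum_{j=1}^{n+1} L_{\xi,j}(q)$ is bounded on $[0,\infty)$, and define $\overline{\varphi}_j(\xi) = \limsup_{q\to\infty} L_{\xi,j}(q)/q$. If $\overline{\varphi}_{k-1}(\xi) = 0$ for some integer $2 \le k \le n$, and each $L_{\xi,j}$ is nondecreasing with $L_{\xi,1} \le \cdots \le L_{\xi,n+1}$, then $\overline{\varphi}_k(\xi) \le 1/(n-k+2)$. -/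
open Filter Set Pointwise
open Topology

/-- Dot product on `Fin d → ℝ`. -/
def dotp {d : ℕ} (x y : Fin d → ℝ) : ℝ := ∑ i, x i * y i

/-- Euclidean norm on `Fin d → ℝ`. -/
noncomputable def enorm' {d : ℕ} (x : Fin d → ℝ) : ℝ := Real.sqrt (dotp x x)

/-- The convex body `C_ξ(Q) = {x : ‖x‖ ≤ 1, |x·ξ| ≤ Q⁻¹}`. -/
def Cbody {d : ℕ} (ξ : Fin d → ℝ) (Q : ℝ) : Set (Fin d → ℝ) :=
  {x | enorm' x ≤ 1 ∧ |dotp x ξ| ≤ Q⁻¹}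

/-- The `j`-th successive minimum of a body `C ⊆ ℝ^d` with respect to `ℤ^d`:
the smallest `λ ≥ 0` such that `λ • C` contains `j` linearly independent
integer points. -/
noncomputable def lambdaMin {d : ℕ} (C : Set (Fin d → ℝ)) (j : ℕ) : ℝ :=
  sInf {lam : ℝ | 0 ≤ lam ∧ ∃ v : Fin j → (Fin d → ℝ),
    LinearIndependent ℝ v ∧ (∀ i, v i ∈ lam • C) ∧ ∀ i t, ∃ z : ℤ, v i t = (z : ℝ)}

/-- `L_{ξ,j}(q) = log λ_j(C_ξ(e^q); ℤ^{n+1})`. -/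
noncomputable def Lfun (n : ℕ) (ξ : Fin (n + 1) → ℝ) (j : ℕ) (q : ℝ) : ℝ :=
  Real.log (lambdaMin (Cbody ξ (Real.exp q)) j)

theorem stmt_12 (n k : ℕ) (hn : 2 ≤ n) (hk1 : 2 ≤ k) (hk2 : k ≤ n)
    (ξ : Fin (n + 1) → ℝ) (hξ : ξ ≠ 0)
    (hbdd : ∃ M : ℝ, ∀ q : ℝ, 0 ≤ q →
      |q - ∑ j ∈ Finset.Icc 1 (n + 1), Lfun n ξ j q| ≤ M)
    (hmono : ∀ j, 1 ≤ j → j ≤ n + 1 → MonotoneOn (Lfun n ξ j) (Ici (0 : ℝ)))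
    (hordered : ∀ q : ℝ, 0 ≤ q → ∀ j, 1 ≤ j → j ≤ n → Lfun n ξ j q ≤ Lfun n ξ (j + 1) q)
    (hk0 : Filter.limsup (fun q => Lfun n ξ (k - 1) q / q) atTop = 0) :
    Filter.limsup (fun q => Lfun n ξ k q / q) atTop ≤ 1 / ((n : ℝ) - k + 2) := by
  obtain ⟨M, hM⟩ := hbdd
  have hchain : ∀ q : ℝ, 0 ≤ q → ∀ i j : ℕ, 1 ≤ i → i ≤ j → j ≤ n + 1 →
      Lfun n ξ i q ≤ Lfun n ξ j q := by
    intro q hq i j hi hij hj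
    induction j with
    | zero => omega
    | succ m ih =>
      rcases Nat.eq_or_lt_of_le hij with h | h
      · rw [h]
      · rcases Nat.eq_zero_or_pos m with hm | hm
        · omega
        · exact le_trans (ih (by omega) (by omega))
            (hordered q hq m (by omega) (by omega))
  set c := Lfun n ξ 1 0 with hc
  have hlow : ∀ q : ℝ, 0 ≤ q → ∀ j, 1 ≤ j → j ≤ n + 1 → c ≤ Lfun n ξ j q := by
    intro q hq j hj1 hj2
    have h1 : c ≤ Lfun n ξ 1 q :=
      hmono 1 le_rfl (by omega) (Set.self_mem_Ici) (Set.mem_Ici.mpr hq) hq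
    exact h1.trans (hchain q hq 1 j le_rfl hj1 hj2)
  obtain ⟨k', rfl⟩ : ∃ m, k = m + 1 := ⟨k - 1, by omega⟩
  set D : ℕ := n + 1 - k' with hDdef
  have hD : 0 < D := by omega
  have hDR : (0:ℝ) < (D : ℝ) := by exact_mod_cast hD
  set C : ℝ := M - k' * c with hCdef
  have key : ∀ q : ℝ, 1 ≤ q → Lfun n ξ (k' + 1) q / q ≤ (q + C) / ((D:ℝ) * q) := by
    intro q hq1
    have hq0 : (0:ℝ) ≤ q := by linarith
    have hsum := abs_le.mp (hM q hq0)
    have hsplit : ∑ j ∈ Finset.Ioc 0 k', Lfun n ξ j q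
        + ∑ j ∈ Finset.Ioc k' (n+1), Lfun n ξ j q
        = ∑ j ∈ Finset.Icc 1 (n + 1), Lfun n ξ j q := by
      rw [show Finset.Icc 1 (n+1) = Finset.Ioc 0 (n+1) from rfl]
      exact Finset.sum_Ioc_consecutive _ (Nat.zero_le k') (by omega)
    have h1 : (k' : ℝ) * c ≤ ∑ j ∈ Finset.Ioc 0 k', Lfun n ξ j q := by
      have := Finset.card_nsmul_le_sum (Finset.Ioc 0 k') (fun j => Lfun n ξ j q) c
        (fun j hj => by
          rw [Finset.mem_Ioc] at hj
          exact hlow q hq0 j (by omega) (by omega))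
      simpa [Nat.card_Ioc, nsmul_eq_mul] using this
    have h2 : (D : ℝ) * Lfun n ξ (k' + 1) q ≤ ∑ j ∈ Finset.Ioc k' (n+1), Lfun n ξ j q := by
      have := Finset.card_nsmul_le_sum (Finset.Ioc k' (n+1)) (fun j => Lfun n ξ j q)
        (Lfun n ξ (k' + 1) q)
        (fun j hj => by
          rw [Finset.mem_Ioc] at hj
          exact hchain q hq0 (k' + 1) j (by omega) (by omega) (by omega))
      simpa [Nat.card_Ioc, nsmul_eq_mul] using this
    have hDL : (D:ℝ) * Lfun n ξ (k' + 1) q ≤ q + C := by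
      rw [hCdef]; linarith
    rw [div_le_div_iff₀ (by linarith) (by positivity)]
    nlinarith [hDL]
  have hle : ∀ᶠ q in (atTop : Filter ℝ),
      Lfun n ξ (k' + 1) q / q ≤ (q + C) / ((D:ℝ) * q) :=
    (eventually_ge_atTop 1).mono key
  have hg : Tendsto (fun q : ℝ => (q + C) / ((D:ℝ) * q)) atTop (𝓝 (1 / (D:ℝ))) := by
    have h0 : Tendsto (fun q : ℝ => 1 / (D:ℝ) + (C / (D:ℝ)) * q⁻¹) atTop
        (𝓝 (1 / (D:ℝ) + (C / (D:ℝ)) * 0)) :=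
      tendsto_const_nhds.add (tendsto_inv_atTop_zero.const_mul _)
    have heq : ∀ᶠ q in (atTop : Filter ℝ),
        1 / (D:ℝ) + (C / (D:ℝ)) * q⁻¹ = (q + C) / ((D:ℝ) * q) := by
      filter_upwards [eventually_gt_atTop (0:ℝ)] with q hq
      field_simp
    have := h0.congr' heq
    simpa using this
  have hcb : IsCoboundedUnder (· ≤ ·) (atTop : Filter ℝ)
      (fun q => Lfun n ξ (k' + 1) q / q) := by
    apply Filter.isCoboundedUnder_le_of_eventually_le atTop (x := -|c|)
    filter_upwards [eventually_ge_atTop (1:ℝ)] with q hq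
    have hq0 : (0:ℝ) < q := by linarith
    have hL : c ≤ Lfun n ξ (k' + 1) q := hlow q (by linarith) (k' + 1) (by omega) (by omega)
    rw [le_div_iff₀ hq0]
    nlinarith [neg_abs_le c, abs_nonneg c]
  have hfin : Filter.limsup (fun q => Lfun n ξ (k' + 1) q / q) atTop ≤ 1 / (D:ℝ) := by
    calc Filter.limsup (fun q => Lfun n ξ (k' + 1) q / q) atTop
        ≤ Filter.limsup (fun q : ℝ => (q + C) / ((D:ℝ) * q)) atTop :=
          limsup_le_limsup hle hcb hg.isBoundedUnder_le
      _ = 1 / (D:ℝ) := hg.limsup_eq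
  have hcast : (D : ℝ) = (n : ℝ) - (k' + 1 : ℕ) + 2 := by
    rw [hDdef]
    push_cast [Nat.cast_sub (by omega : k' ≤ n + 1)]
    ring
  rwa [hcast] at hfin
end

section
/- Let $n \ge 2$, $2 \le k \le n$, and let $\xi \in \mathbb{R}^{n+1}$ have coordinates linearly independent over $\mathbb{Q}$. Assume the Schmidt–Summerer inequality $\underline{\varphi}_{j+1}(\xi) \le \overline{\varphi}_j(\xi)$ for $1 \le j \le n$, where $\underline{\varphi}_j(\xi) = \liminf_{q\to\infty} L_{\xi,j}(q)/q$ and $\overline{\varphi}_j(\xi) = \limsup_{q\to\infty} L_{\xi,j}(q)/q$, and that $q - \sum_{j=1}^{n+1} L_{\xi,j}(q)$ is bounded and $L_{\xi,1} \le \cdots \le L_{\xi,n+1}$. If $\lim_{q\to\infty} L_{\xi,k-1}(q)/q = 0$, then $\liminf_{q\to\infty} L_{\xi,k+1}(q)/q \le 1/(n-k+2)$. -/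
open Filter Set Pointwise

lemma enorm'_ge_abs {d : ℕ} (x : Fin d → ℝ) (t : Fin d) : |x t| ≤ enorm' x := by
  rw [enorm', dotp]
  have h1 : x t * x t ≤ ∑ i, x i * x i :=
    Finset.single_le_sum (fun i _ => mul_self_nonneg (x i)) (Finset.mem_univ t)
  have := Real.sqrt_le_sqrt h1
  rwa [show x t * x t = |x t| ^ 2 by rw [sq_abs]; ring, Real.sqrt_sq (abs_nonneg _)] at this

lemma Lfun_nonneg (n : ℕ) (ξ : Fin (n + 1) → ℝ) (j : ℕ) (hj : 1 ≤ j) (q : ℝ) :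
    0 ≤ Lfun n ξ j q := by
  rw [Lfun, lambdaMin]
  set S := {lam : ℝ | 0 ≤ lam ∧ ∃ v : Fin j → (Fin (n+1) → ℝ),
    LinearIndependent ℝ v ∧ (∀ i, v i ∈ lam • Cbody ξ (Real.exp q)) ∧
      ∀ i t, ∃ z : ℤ, v i t = (z : ℝ)} with hS
  have hlb : ∀ lam ∈ S, (1 : ℝ) ≤ lam := by
    rintro lam ⟨hlam0, v, hli, hmem, hint⟩
    set i : Fin j := ⟨0, hj⟩
    have hvne : v i ≠ 0 := hli.ne_zero i
    obtain ⟨t, ht⟩ : ∃ t, v i t ≠ 0 := by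
      by_contra h
      push_neg at h
      exact hvne (funext h)
    obtain ⟨z, hz⟩ := hint i t
    have hz0 : z ≠ 0 := by rintro rfl; simp at hz; exact ht hz
    have h1 : (1 : ℝ) ≤ |v i t| := by
      rw [hz]
      exact_mod_cast Int.one_le_abs hz0
    have h2 : (1 : ℝ) ≤ enorm' (v i) := h1.trans (enorm'_ge_abs _ _)
    obtain ⟨c, hc, hvc⟩ := hmem i
    have hnorm : enorm' (v i) = |lam| * enorm' c := by
      rw [← hvc, enorm', dotp]
      have : ∑ s, (lam • c) s * (lam • c) s = lam ^ 2 * ∑ s, c s * c s := by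
        rw [Finset.mul_sum]
        refine Finset.sum_congr rfl fun s _ => ?_
        simp [Pi.smul_apply, smul_eq_mul]; ring
      rw [this, show lam ^ 2 = |lam| ^ 2 by rw [sq_abs],
        Real.sqrt_mul (by positivity), Real.sqrt_sq (abs_nonneg _)]
      rfl
    have hc1 : enorm' c ≤ 1 := hc.1
    have : enorm' (v i) ≤ lam := by
      rw [hnorm, abs_of_nonneg hlam0]
      calc lam * enorm' c ≤ lam * 1 := by
            apply mul_le_mul_of_nonneg_left hc1 hlam0
        _ = lam := mul_one lam
    linarith
  rcases eq_empty_or_nonempty S with h | h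
  · rw [h, Real.sInf_empty, Real.log_zero]
  · exact Real.log_nonneg (le_csInf h hlb)

theorem stmt_14 (n k : ℕ) (hn : 2 ≤ n) (hk1 : 2 ≤ k) (hk2 : k ≤ n)
    (ξ : Fin (n + 1) → ℝ)
    (hξ : LinearIndependent ℚ ξ)
    (hSS : ∀ j, 1 ≤ j → j ≤ n →
      Filter.liminf (fun q => Lfun n ξ (j + 1) q / q) atTop ≤
        Filter.limsup (fun q => Lfun n ξ j q / q) atTop)
    (hbdd : ∃ M : ℝ, ∀ q : ℝ, 0 ≤ q →
      |q - ∑ j ∈ Finset.Icc 1 (n + 1), Lfun n ξ j q| ≤ M)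
    (hordered : ∀ q : ℝ, 0 ≤ q → ∀ j, 1 ≤ j → j ≤ n → Lfun n ξ j q ≤ Lfun n ξ (j + 1) q)
    (hzero : Filter.Tendsto (fun q => Lfun n ξ (k - 1) q / q) atTop (nhds 0)) :
    Filter.liminf (fun q => Lfun n ξ (k + 1) q / q) atTop ≤ 1 / ((n : ℝ) - k + 2) := by
  obtain ⟨M, hM⟩ := hbdd
  have hk1' : (1 : ℕ) ≤ k := le_trans one_le_two hk1
  have hknR : (k : ℝ) ≤ n := by exact_mod_cast hk2
  have hD : (0 : ℝ) < (n : ℝ) - k + 2 := by linarith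
  set D : ℝ := (n : ℝ) - k + 2 with hDdef
  -- monotone chain from `hordered`
  have hmono : ∀ q : ℝ, 0 ≤ q → ∀ b, k ≤ b → b ≤ n + 1 →
      Lfun n ξ k q ≤ Lfun n ξ b q := by
    intro q hq b hkb hbn
    induction b with
    | zero => omega
    | succ m ih =>
      rcases eq_or_lt_of_le hkb with h | h
      · rw [h]
      · have hkm : k ≤ m := by omega
        have h1 := ih hkm (by omega)
        have h2 := hordered q hq m (by omega) (by omega)
        linarith
  -- key pointwise bound
  have key : ∀ q : ℝ, 1 ≤ q → Lfun n ξ k q / q ≤ 1 / D + (M / D) / q := by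
    intro q hq
    have hq0 : (0 : ℝ) ≤ q := by linarith
    have hqpos : (0 : ℝ) < q := by linarith
    have hsum : ∑ j ∈ Finset.Icc 1 (n + 1), Lfun n ξ j q ≤ q + M := by
      have h := abs_le.mp (hM q hq0)
      linarith [h.1]
    have h1 : ∀ j ∈ Finset.Icc k (n + 1), Lfun n ξ k q ≤ Lfun n ξ j q := by
      intro j hj
      rw [Finset.mem_Icc] at hj
      exact hmono q hq0 j hj.1 hj.2
    have h2 := Finset.card_nsmul_le_sum (Finset.Icc k (n + 1)) _ _ h1
    have hcard : (Finset.Icc k (n + 1)).card = n + 2 - k := by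
      simp [Nat.card_Icc]
    have h3 : ∑ j ∈ Finset.Icc k (n + 1), Lfun n ξ j q ≤
        ∑ j ∈ Finset.Icc 1 (n + 1), Lfun n ξ j q := by
      apply Finset.sum_le_sum_of_subset_of_nonneg
      · intro j hj
        rw [Finset.mem_Icc] at *
        omega
      · intro j hj _
        rw [Finset.mem_Icc] at hj
        exact Lfun_nonneg n ξ j hj.1 q
    have hcast : ((n + 2 - k : ℕ) : ℝ) = D := by
      rw [hDdef, Nat.cast_sub (by omega)]
      push_cast
      ring
    have h4 : D * Lfun n ξ k q ≤ q + M := by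
      have := h2.trans (h3.trans hsum)
      rwa [hcard, nsmul_eq_mul, hcast] at this
    have h5 : Lfun n ξ k q ≤ (q + M) / D := by
      rw [le_div_iff₀ hD]
      linarith
    have h6 : Lfun n ξ k q / q ≤ ((q + M) / D) / q := by
      gcongr
    calc Lfun n ξ k q / q ≤ ((q + M) / D) / q := h6
      _ = 1 / D + (M / D) / q := by field_simp; try ring
  -- limit of the bounding function
  have hgl : Tendsto (fun q : ℝ => 1 / D + (M / D) / q) atTop (nhds (1 / D)) := by
    have h0 : Tendsto (fun q : ℝ => (M / D) / q) atTop (nhds 0) :=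
      Tendsto.div_atTop tendsto_const_nhds tendsto_id
    simpa using tendsto_const_nhds.add h0
  have hlimsup : limsup (fun q => Lfun n ξ k q / q) atTop ≤ 1 / D := by
    have hco : IsCoboundedUnder (· ≤ ·) atTop (fun q => Lfun n ξ k q / q) := by
      apply Filter.isCoboundedUnder_le_of_eventually_le atTop (x := 0)
      filter_upwards [eventually_ge_atTop (1 : ℝ)] with q hq
      exact div_nonneg (Lfun_nonneg n ξ k hk1' q) (by linarith)
    have hev : (fun q => Lfun n ξ k q / q) ≤ᶠ[atTop] fun q => 1 / D + (M / D) / q := by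
      filter_upwards [eventually_ge_atTop (1 : ℝ)] with q hq using key q hq
    calc limsup (fun q => Lfun n ξ k q / q) atTop
        ≤ limsup (fun q => 1 / D + (M / D) / q) atTop :=
          limsup_le_limsup hev hco hgl.isBoundedUnder_le
      _ = 1 / D := hgl.limsup_eq
  calc Filter.liminf (fun q => Lfun n ξ (k + 1) q / q) atTop
      ≤ Filter.limsup (fun q => Lfun n ξ k q / q) atTop := hSS k hk1' hk2
    _ ≤ 1 / D := hlimsup
end

section
/- Let $n\ge 2$. Suppose for each $\theta \in (0,\infty)$ we have a function $\mathbf{P}^{(\theta)}:(0,\infty)\to\mathbb{R}^{n+1}$ whose first component satisfies $P^{(\theta)}_1(q) = \theta 2^{m^3}$ whenever $q \in [r^{(\theta)}_m, t^{(\theta)}_m]$, with $r^{(\theta)}_m, t^{(\theta)}_m$ as in the paper's construction. Then for $0 < \theta < \theta'$, the difference $\mathbf{P}^{(\theta')} - \mathbf{P}^{(\theta)}$ is unbounded on $(0,\infty)$; specifically $\|\mathbf{P}^{(\theta')}(r^{(\theta')}_m) - \mathbf{P}^{(\theta)}(r^{(\theta')}_m)\| \ge (\theta'-\theta)2^{m^3}$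 for all sufficiently large $m$. -/
open Filter

lemma abs_apply_le_norm {d : ℕ} (x : EuclideanSpace ℝ (Fin (d+1))) (i : Fin (d+1)) :
    |x i| ≤ ‖x‖ := by
  rw [EuclideanSpace.norm_eq]
  have h1 : |x i| = Real.sqrt (‖x i‖ ^ 2) := by
    rw [Real.sqrt_sq_eq_abs, Real.norm_eq_abs, abs_abs]
  rw [h1]
  apply Real.sqrt_le_sqrt
  exact Finset.single_le_sum (f := fun j => ‖x j‖ ^ 2)
    (fun j _ => by positivity) (Finset.mem_univ i)

lemma cube_mono {m n : ℤ} (h : m ≤ n) : m ^ 3 ≤ n ^ 3 := by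
  nlinarith [sq_nonneg (m + n), sq_nonneg m, sq_nonneg n]

lemma arith_key (θ θ' κ c A B C : ℝ) (hθ : 0 < θ) (hθθ' : θ ≤ θ') (hκ : 2 ≤ κ)
    (hc : 1 ≤ c) (hApos : 0 < A) (hAB : A ≤ B) (hBC : B ≤ C)
    (hbig : θ' * ((κ + c) * B) ≤ θ * (c * C)) :
    θ * (κ * A + c * B) ≤ θ' * (κ * A + c * B) ∧
    θ' * (κ * A + c * B) ≤ θ * ((κ - 1) * A + B + c * C) ∧
    θ' * (κ * A + c * B) ≤ θ' * ((κ - 1) * A + B + c * C) ∧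
    0 < θ' * (κ * A + c * B) := by
  have hθ' : 0 < θ' := lt_of_lt_of_le hθ hθθ'
  have hBpos : 0 < B := lt_of_lt_of_le hApos hAB
  have hκA : 0 < κ * A := mul_pos (by linarith) hApos
  have hcB : 0 < c * B := mul_pos (by linarith) hBpos
  have hs : 0 < κ * A + c * B := by linarith
  have hcBC : c * B ≤ c * C := mul_le_mul_of_nonneg_left hBC (by linarith)
  have hκAB : κ * A ≤ κ * B := mul_le_mul_of_nonneg_left hAB (by linarith)
  refine ⟨mul_le_mul_of_nonneg_right hθθ' hs.le, ?_,
    mul_le_mul_of_nonneg_left (by linarith) hθ'.le, mul_pos hθ' hs⟩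
  have h1 : θ' * (κ * A + c * B) ≤ θ' * ((κ + c) * B) :=
    mul_le_mul_of_nonneg_left (by linarith) hθ'.le
  have h2 : θ * (c * C) ≤ θ * ((κ - 1) * A + B + c * C) :=
    mul_le_mul_of_nonneg_left (by nlinarith) hθ.le
  linarith

theorem stmt_17 (n k : ℕ) (hn : 2 ≤ n) (hk1 : 2 ≤ k) (hk2 : k ≤ n)
    (a : ℝ → ℤ → ℝ) (hadef : ∀ (θ : ℝ) (m : ℤ), a θ m = θ * (2 : ℝ) ^ (m ^ 3))
    (r t : ℝ → ℤ → ℝ)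
    (hrdef : ∀ (θ : ℝ) (m : ℤ),
      r θ m = (k : ℝ) * a θ m + ((n : ℝ) + 1 - k) * a θ (m + 1))
    (htdef : ∀ (θ : ℝ) (m : ℤ),
      t θ m = ((k : ℝ) - 1) * a θ m + a θ (m + 1) + ((n : ℝ) + 1 - k) * a θ (m + 2))
    (P : ℝ → ℝ → EuclideanSpace ℝ (Fin (n + 1)))
    (hP1 : ∀ θ : ℝ, 0 < θ → ∀ m : ℤ, ∀ q ∈ Set.Icc (r θ m) (t θ m),
      P θ q 0 = a θ m)
    (θ θ' : ℝ) (hθ : 0 < θ) (hθθ' : θ < θ') :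
    (∀ M : ℝ, ∃ q : ℝ, 0 < q ∧ M ≤ ‖P θ' q - P θ q‖) ∧
    (∀ᶠ m : ℤ in atTop,
      (θ' - θ) * (2 : ℝ) ^ (m ^ 3) ≤ ‖P θ' (r θ' m) - P θ (r θ' m)‖) := by
  have hθ' : (0:ℝ) < θ' := hθ.trans hθθ'
  have hkn : (k : ℝ) ≤ n := by exact_mod_cast hk2
  have hk1' : (2 : ℝ) ≤ k := by exact_mod_cast hk1
  have hc : (1:ℝ) ≤ (n : ℝ) + 1 - k := by linarith
  have hcpos : (0:ℝ) < (n : ℝ) + 1 - k := by linarith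
  obtain ⟨N, hN⟩ := pow_unbounded_of_one_lt (θ' * ((n:ℝ) + 1) / (θ * ((n:ℝ) + 1 - k))) one_lt_two
  have hNkey : θ' * ((n:ℝ) + 1) ≤ θ * ((n:ℝ) + 1 - k) * 2 ^ N := by
    have h2 : 0 < θ * ((n:ℝ) + 1 - k) := by positivity
    rw [div_lt_iff₀ h2] at hN
    nlinarith
  have hz : ∀ x y : ℤ, x ≤ y → (2:ℝ) ^ x ≤ (2:ℝ) ^ y := fun x y h =>
    zpow_le_zpow_right₀ one_le_two h
  have key : ∀ m : ℤ, (N : ℤ) ≤ m →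
      r θ m ≤ r θ' m ∧ r θ' m ≤ t θ m ∧ r θ' m ≤ t θ' m ∧ 0 < r θ' m := by
    intro m hm
    have hm0 : (0:ℤ) ≤ m := le_trans (Int.ofNat_nonneg N) hm
    have hr : ∀ ϑ : ℝ,
        r ϑ m = ϑ * ((k:ℝ) * (2:ℝ) ^ (m ^ 3) + ((n:ℝ) + 1 - k) * (2:ℝ) ^ ((m+1) ^ 3)) := by
      intro ϑ; rw [hrdef, hadef, hadef]; ring
    have ht : ∀ ϑ : ℝ,
        t ϑ m = ϑ * (((k:ℝ) - 1) * (2:ℝ) ^ (m ^ 3) + (2:ℝ) ^ ((m+1) ^ 3)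
          + ((n:ℝ) + 1 - k) * (2:ℝ) ^ ((m+2) ^ 3)) := by
      intro ϑ; rw [htdef, hadef, hadef, hadef]; ring
    obtain ⟨A, hA⟩ : ∃ A, (2:ℝ) ^ (m ^ 3) = A := ⟨_, rfl⟩
    obtain ⟨B, hB⟩ : ∃ B, (2:ℝ) ^ ((m+1) ^ 3) = B := ⟨_, rfl⟩
    obtain ⟨C, hC⟩ : ∃ C, (2:ℝ) ^ ((m+2) ^ 3) = C := ⟨_, rfl⟩
    have hApos : 0 < A := hA ▸ (by positivity)
    have hBpos : 0 < B := hB ▸ (by positivity)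
    have hAB : A ≤ B := hA ▸ hB ▸ hz _ _ (cube_mono (by linarith))
    have hBC : B ≤ C := hB ▸ hC ▸ hz _ _ (cube_mono (by linarith))
    have hgap : (N : ℤ) ≤ (m+2)^3 - (m+1)^3 := by nlinarith
    have hCB : B * 2 ^ N ≤ C := by
      rw [← hB, ← hC]
      have h3 : (2:ℝ) ^ ((m+1)^3 + (N:ℤ)) ≤ (2:ℝ) ^ ((m+2)^3) := hz _ _ (by linarith)
      rw [zpow_add₀ (by norm_num : (2:ℝ) ≠ 0)] at h3
      simpa [zpow_natCast] using h3
    have hbig : θ' * (((k:ℝ) + ((n:ℝ) + 1 - k)) * B) ≤ θ * (((n:ℝ) + 1 - k) * C) :=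
      calc θ' * (((k:ℝ) + ((n:ℝ) + 1 - k)) * B) = (θ' * ((n:ℝ) + 1)) * B := by ring
        _ ≤ (θ * ((n:ℝ) + 1 - k) * 2 ^ N) * B :=
            mul_le_mul_of_nonneg_right hNkey hBpos.le
        _ = (θ * ((n:ℝ) + 1 - k)) * (B * 2 ^ N) := by ring
        _ ≤ (θ * ((n:ℝ) + 1 - k)) * C :=
            mul_le_mul_of_nonneg_left hCB (by positivity)
        _ = θ * (((n:ℝ) + 1 - k) * C) := by ring
    obtain ⟨e1, e2, e3, e4⟩ := arith_key θ θ' (k:ℝ) ((n:ℝ) + 1 - k) A B C hθ hθθ'.le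
      hk1' hc hApos hAB hBC hbig
    rw [hr, hr, ht, ht, hA, hB, hC]
    exact ⟨e1, e2, e3, e4⟩
  have hev : ∀ m : ℤ, (N : ℤ) ≤ m →
      (θ' - θ) * (2 : ℝ) ^ (m ^ 3) ≤ ‖P θ' (r θ' m) - P θ (r θ' m)‖ := by
    intro m hm
    obtain ⟨h1, h2, h3, _⟩ := key m hm
    have hP' : P θ' (r θ' m) 0 = a θ' m := hP1 θ' hθ' m _ ⟨le_refl _, h3⟩
    have hPθ : P θ (r θ' m) 0 = a θ m := hP1 θ hθ m _ ⟨h1, h2⟩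
    have hcomp : (P θ' (r θ' m) - P θ (r θ' m)) 0 = (θ' - θ) * (2 : ℝ) ^ (m ^ 3) := by
      rw [PiLp.sub_apply, hP', hPθ, hadef, hadef]; ring
    calc (θ' - θ) * (2 : ℝ) ^ (m ^ 3) ≤ |(P θ' (r θ' m) - P θ (r θ' m)) 0| := by
          rw [hcomp]; exact le_abs_self _
      _ ≤ ‖P θ' (r θ' m) - P θ (r θ' m)‖ := abs_apply_le_norm _ _
  constructor
  · intro M
    obtain ⟨N', hN'⟩ := pow_unbounded_of_one_lt (M / (θ' - θ)) one_lt_two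
    set m : ℤ := max (N : ℤ) (max (N' : ℤ) 1) with hmdef
    have hmN : (N:ℤ) ≤ m := le_max_left _ _
    have hmN' : (N':ℤ) ≤ m := le_trans (le_max_left _ _) (le_max_right _ _)
    have hm1 : (1:ℤ) ≤ m := le_trans (le_max_right _ _) (le_max_right _ _)
    have hm3 : (N':ℤ) ≤ m ^ 3 := by
      nlinarith [mul_nonneg (mul_nonneg (by linarith : (0:ℤ) ≤ m - 1)
        (by linarith : (0:ℤ) ≤ m)) (by linarith : (0:ℤ) ≤ m + 1)]
    have hpos : (0:ℝ) < θ' - θ := by linarith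
    have hbig : M ≤ (θ' - θ) * (2 : ℝ) ^ (m ^ 3) := by
      have h2 : (2:ℝ) ^ ((N':ℕ) : ℤ) ≤ (2:ℝ) ^ (m ^ 3) := hz _ _ hm3
      rw [zpow_natCast] at h2
      rw [div_lt_iff₀ hpos] at hN'
      calc M ≤ (θ' - θ) * 2 ^ N' := by linarith
        _ ≤ (θ' - θ) * (2:ℝ) ^ (m ^ 3) := mul_le_mul_of_nonneg_left h2 hpos.le
    exact ⟨r θ' m, (key m hmN).2.2.2, hbig.trans (hev m hmN)⟩
  · exact eventually_atTop.mpr ⟨(N:ℤ), hev⟩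
end
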